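/- Mutual exclusion of leases (abstract version): let grants be a finite sequence of pairs (owner, timestamp) with strictly increasing timestamps, where a new grant to a different owner at timestamp t is only allowed if t exceeds the previous grant's timestamp plus L. Then for any two grants to distinct owners, the intervals [timestamp, timestamp + L] are disjoint. -/
import Mathlib


/-- Mutual exclusion of leases (abstract version): for a sequence of grants
`(o k, t k)` with strictly increasing timestamps such that a grant to a new
owner must come more than `L` after the previous grant, any two grants to
distinct owners have disjoint lease intervals `[t, t + L]`. -/
theorem abstract_lease_mutual_exclusion
    {Owner : Type*} (L : ℝ) (hL : 0 < L)
    (m : ℕ) (o : ℕ → Owner) (t : ℕ → ℝ)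
    (hinc : ∀ k, k + 1 < m → t k < t (k + 1))
    (hinv : ∀ k, k + 1 < m → o (k + 1) ≠ o k → t k + L < t (k + 1)) :
    ∀ j k, j < k → k < m → o j ≠ o k →
      Disjoint (Set.Icc (t j) (t j + L)) (Set.Icc (t k) (t k + L)) := by
  have mono : ∀ a b, a ≤ b → b < m → t a ≤ t b := by
    intro a b hab hbm
    induction b with
    | zero => simp_all
    | succ n ih =>
      rcases Nat.lt_succ_iff_lt_or_eq.mp (Nat.lt_succ_of_le hab) with h | h
      · exact le_trans (ih (Nat.lt_succ_iff.mp h) (Nat.lt_of_succ_lt hbm))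
          (le_of_lt (hinc n hbm))
      · exact le_of_eq (by rw [h])
  have gap : ∀ j k, j < k → k < m → o j ≠ o k → t j + L < t k := by
    intro j k
    induction k with
    | zero => omega
    | succ n ih =>
      intro hjk hkm hne
      by_cases h : o (n + 1) = o n
      · have hjn : j < n := by
          rcases Nat.lt_succ_iff_lt_or_eq.mp hjk with h' | h'
          · exact h'
          · subst h'; exact absurd h.symm hne
        exact lt_trans (ih hjn (Nat.lt_of_succ_lt hkm) (fun he => hne (he.trans h.symm)))
          (hinc n hkm)
      · have h1 := hinv n hkm h
        have h2 := mono j n (Nat.lt_succ_iff.mp hjk) (Nat.lt_of_succ_lt hkm)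
        linarith
  intro j k hjk hkm hne
  have := gap j k hjk hkm hne
  rw [Set.disjoint_iff_forall_ne]
  rintro x hx y hy rfl
  have := hx.2
  have := hy.1
  linarith
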